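/- arXiv:1106.1835 — 2 statements merged into one kernel-verified Lean document; each statement's English description precedes it below -/
import Mathlib

section
/- Let N ≥ 1 and n ≥ 1 be integers, u an n×n real matrix, and η̄ ∈ ℝⁿ with η̄_j ≥ 0 and η̄₁+⋯+η̄_n ≤ 1. If Σ_m b_n(m;N;η̄)·P_m(x) = 0 for every nonzero x ∈ ℕⁿ with x₁+⋯+x_n ≤ N (the sum over all m ∈ ℕⁿ with m₁+⋯+m_n ≤ N), then Σ_{j=1}^n η̄_j u_{ji} = 1 for every i = 1,…,n. In particular this condition is necessary for the dual orthogonality of the family {P_m} with respect to the weight b_n(·;N;η̄) in the degree index m. -/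
/-- The Pochhammer symbol `(a)ᵣ = a(a+1)⋯(a+r-1)`. -/
noncomputable def poch (a : ℝ) (r : ℕ) : ℝ := Polynomial.eval a (ascPochhammer ℝ r)

/-- The multinomial distribution
`b_n(x;N;η) = N!/(x₁!⋯x_n!(N-∑x)!) ∏ ηᵢ^{xᵢ} (1-∑η)^{N-∑x}`. -/
noncomputable def bn {n : ℕ} (N : ℕ) (x : Fin n → ℕ) (η : Fin n → ℝ) : ℝ :=
  (N.factorial : ℝ) / ((∏ i, ((x i).factorial : ℝ)) * ((N - ∑ i, x i).factorial : ℝ))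
    * (∏ i, η i ^ x i) * (1 - ∑ i, η i) ^ (N - ∑ i, x i)

/-- The multivariable Krawtchouk polynomial
`P_m(x) = F₁⁽ⁿ⁾(-m;-x;-N;u)`, a sum over all `n × n` matrices `(k_{ij})`
of nonnegative integers with `∑_{i,j} k_{ij} ≤ N`. -/
noncomputable def P {n : ℕ} (N : ℕ) (u : Fin n → Fin n → ℝ) (m x : Fin n → ℕ) : ℝ :=
  ∑ k ∈ Finset.filter (fun k => ∑ i, ∑ j, k i j ≤ N)
      (Fintype.piFinset fun _ : Fin n => Fintype.piFinset fun _ : Fin n => Finset.range (N + 1)),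
    ((∏ i, poch (-(m i : ℝ)) (∑ j, k i j)) * ∏ i, poch (-(x i : ℝ)) (∑ j, k j i)) /
      ((∏ i, ∏ j, ((k i j).factorial : ℝ)) * poch (-(N : ℝ)) (∑ i, ∑ j, k i j)) *
      ∏ i, ∏ j, u i j ^ k i j

open Finset

lemma poch_zero (a : ℝ) : poch a 0 = 1 := by simp [poch]
lemma poch_succ (a : ℝ) (r : ℕ) : poch a (r+1) = a * poch (a+1) r := by
  simp [poch, ascPochhammer_succ_left, Polynomial.eval_comp]
lemma poch_one (a : ℝ) : poch a 1 = a := by simp [poch_succ, poch_zero]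
lemma poch_z (r : ℕ) (h : 1 ≤ r) : poch 0 r = 0 := by
  obtain ⟨s, rfl⟩ := Nat.exists_eq_add_of_le h
  rw [add_comm, poch_succ, zero_mul]
lemma poch_neg_one (r : ℕ) (h : 2 ≤ r) : poch (-1) r = 0 := by
  obtain ⟨s, rfl⟩ := Nat.exists_eq_add_of_le h
  rw [add_comm, show s + 2 = (s+1)+1 from rfl, poch_succ]
  norm_num [poch_z (s+1) (Nat.le_add_left 1 s)]



lemma mult_key {ι : Type*} [Fintype ι] [DecidableEq ι] (g' : ι → ℕ) (j : ι) :
    (g' j + 1) * Nat.multinomial univ (Function.update g' j (g' j + 1))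
      = (∑ i, g' i + 1) * Nat.multinomial univ g' := by
  set g := Function.update g' j (g' j + 1) with hg
  have hoff : ∀ i ∈ univ.erase j, g i = g' i := fun i hi =>
    Function.update_of_ne (Finset.ne_of_mem_erase hi) _ _
  have hj : g j = g' j + 1 := Function.update_self _ _ _
  have hsum : ∑ i, g i = ∑ i, g' i + 1 := by
    rw [← Finset.add_sum_erase _ g (mem_univ j), ← Finset.add_sum_erase _ g' (mem_univ j),
      Finset.sum_congr rfl hoff, hj]
    ring
  have hprod : ∏ i, (g i).factorial = (g' j + 1) * ∏ i, (g' i).factorial := by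
    rw [← Finset.mul_prod_erase _ (fun i => (g i).factorial) (mem_univ j),
      ← Finset.mul_prod_erase _ (fun i => (g' i).factorial) (mem_univ j),
      Finset.prod_congr rfl (fun i hi => by rw [hoff i hi]), hj, Nat.factorial_succ]
    ring
  have h1 := Nat.multinomial_spec (univ : Finset ι) g
  have h2 := Nat.multinomial_spec (univ : Finset ι) g'
  have hpos : 0 < ∏ i, (g' i).factorial := Finset.prod_pos fun i _ => (g' i).factorial_pos
  apply Nat.eq_of_mul_eq_mul_left hpos
  calc (∏ i, (g' i).factorial) * ((g' j + 1) * Nat.multinomial univ g)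
      = (∏ i, (g i).factorial) * Nat.multinomial univ g := by rw [hprod]; ring
    _ = (∑ i, g' i + 1).factorial := by rw [h1, hsum]
    _ = (∑ i, g' i + 1) * ((∏ i, (g' i).factorial) * Nat.multinomial univ g') := by
        rw [h2, Nat.factorial_succ]
    _ = _ := by ring


lemma upd_sum {ι : Type*} [Fintype ι] [DecidableEq ι] (a : ι → ℕ) (j : ι) (v : ℕ) :
    univ.sum (Function.update a j v) + a j = v + univ.sum a := by
  rw [← Finset.add_sum_erase _ (Function.update a j v) (mem_univ j),
    ← Finset.add_sum_erase _ a (mem_univ j),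
    Finset.sum_congr rfl (fun i hi => Function.update_of_ne (Finset.ne_of_mem_erase hi) v a),
    Function.update_self]
  ring

lemma antidiag_expect {ι : Type*} [Fintype ι] [DecidableEq ι] (f : ι → ℝ) (j : ι) (N : ℕ) :
    ∑ g ∈ piAntidiag (univ : Finset ι) (N+1),
        (g j : ℝ) * (Nat.multinomial univ g : ℝ) * ∏ i, f i ^ g i
      = ((N:ℝ)+1) * f j *
        ∑ g ∈ piAntidiag (univ : Finset ι) N, (Nat.multinomial univ g : ℝ) * ∏ i, f i ^ g i := by
  have hfil : ∑ g ∈ Finset.filter (fun g => g j ≠ 0) (piAntidiag (univ : Finset ι) (N+1)),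
      (g j : ℝ) * (Nat.multinomial univ g : ℝ) * ∏ i, f i ^ g i
      = ∑ g ∈ piAntidiag (univ : Finset ι) (N+1),
      (g j : ℝ) * (Nat.multinomial univ g : ℝ) * ∏ i, f i ^ g i := by
    apply Finset.sum_filter_of_ne
    intro g _ hne h0
    apply hne
    simp [h0]
  rw [← hfil, Finset.mul_sum]
  apply Finset.sum_nbij' (i := fun g => Function.update g j (g j - 1))
    (j := fun g' => Function.update g' j (g' j + 1))
  · intro a ha
    simp only [Finset.mem_filter, Finset.mem_piAntidiag] at ha ⊢
    have h1 : 1 ≤ a j := Nat.one_le_iff_ne_zero.mpr ha.2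
    refine ⟨?_, fun i _ => mem_univ i⟩
    have hu := upd_sum a j (a j - 1)
    have h2 := ha.1.1
    omega
  · intro a ha
    simp only [Finset.mem_filter, Finset.mem_piAntidiag] at ha ⊢
    have hu := upd_sum a j (a j + 1)
    have h2 := ha.1
    refine ⟨⟨?_, fun i _ => mem_univ i⟩, ?_⟩
    · omega
    · simp
  · intro a ha
    simp only [Finset.mem_filter, Finset.mem_piAntidiag] at ha
    have h1 : 1 ≤ a j := Nat.one_le_iff_ne_zero.mpr ha.2
    funext i
    by_cases hij : i = j
    · subst hij; simp only [Function.update_self]; omega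
    · simp [Function.update_of_ne hij]
  · intro a _
    funext i
    by_cases hij : i = j
    · subst hij; simp [Function.update_self]
    · simp [Function.update_of_ne hij]
  · intro a ha
    beta_reduce
    simp only [Finset.mem_filter, Finset.mem_piAntidiag] at ha
    have h1 : 1 ≤ a j := Nat.one_le_iff_ne_zero.mpr ha.2
    set g' := Function.update a j (a j - 1) with hg'
    have hupd : Function.update g' j (g' j + 1) = a := by
      funext i
      by_cases hij : i = j
      · subst hij; simp only [hg', Function.update_self]; omega
      · simp [hg', Function.update_of_ne hij]
    have hgj : g' j + 1 = a j := by
      rw [hg', Function.update_self]; omega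
    have hsum : ∑ i, g' i = N := by
      have hu := upd_sum a j (a j - 1)
      rw [← hg'] at hu
      have h2 := ha.1.1
      have e1 : univ.sum g' = ∑ i, g' i := rfl
      omega
    have hkey := mult_key g' j
    rw [hupd, hgj, hsum] at hkey
    have hpe : ∏ i ∈ univ.erase j, f i ^ g' i = ∏ i ∈ univ.erase j, f i ^ a i :=
      Finset.prod_congr rfl (fun i hi => by
        rw [hg', Function.update_of_ne (Finset.ne_of_mem_erase hi)])
    have hprodf : ∏ i, f i ^ a i = f j * ∏ i, f i ^ g' i := by
      rw [← Finset.mul_prod_erase _ (fun i => f i ^ a i) (mem_univ j),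
        ← Finset.mul_prod_erase _ (fun i => f i ^ g' i) (mem_univ j), hpe, ← hgj, pow_succ]
      ring
    have hc : ((a j : ℝ)) * (Nat.multinomial univ a : ℝ)
        = ((N:ℝ)+1) * (Nat.multinomial univ g' : ℝ) := by
      exact_mod_cast congrArg (Nat.cast : ℕ → ℝ) hkey
    calc (a j : ℝ) * (Nat.multinomial univ a : ℝ) * ∏ i, f i ^ a i
        = ((a j : ℝ) * (Nat.multinomial univ a : ℝ)) * (f j * ∏ i, f i ^ g' i) := by
          rw [hprodf]; try ring
      _ = (((N:ℝ)+1) * (Nat.multinomial univ g' : ℝ)) * (f j * ∏ i, f i ^ g' i) := by rw [hc]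
      _ = ((N:ℝ)+1) * f j * ((Nat.multinomial univ g' : ℝ) * ∏ i, f i ^ g' i) := by ring

lemma transport (n N : ℕ) (φ : (Fin (n+1) → ℕ) → ℝ) :
    ∑ m ∈ Finset.filter (fun m => ∑ i, m i ≤ N)
        (Fintype.piFinset fun _ : Fin n => Finset.range (N + 1)),
      φ (Fin.snoc m (N - ∑ i, m i))
    = ∑ g ∈ piAntidiag (univ : Finset (Fin (n+1))) N, φ g := by
  apply Finset.sum_nbij' (i := fun m => (Fin.snoc m (N - ∑ i, m i) : Fin (n+1) → ℕ))
    (j := fun g => fun t => g (Fin.castSucc t))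
  · intro m hm
    simp only [Finset.mem_filter] at hm
    simp only [Finset.mem_piAntidiag]
    refine ⟨?_, fun i _ => mem_univ i⟩
    rw [show univ.sum (Fin.snoc m (N - ∑ i, m i) : Fin (n+1) → ℕ)
        = ∑ i : Fin (n+1), (Fin.snoc m (N - ∑ i, m i) : Fin (n+1) → ℕ) i from rfl,
      Fin.sum_univ_castSucc]
    simp only [Fin.snoc_castSucc, Fin.snoc_last]
    omega
  · intro g hg
    simp only [Finset.mem_piAntidiag] at hg
    have hle : ∀ t : Fin (n+1), g t ≤ N := by
      intro t
      rw [← hg.1]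
      exact Finset.single_le_sum (fun i _ => Nat.zero_le (g i)) (mem_univ t)
    have hsum : ∑ t : Fin n, g (Fin.castSucc t) ≤ N := by
      have : univ.sum g = ∑ i : Fin (n+1), g i := rfl
      rw [this, Fin.sum_univ_castSucc] at hg
      omega
    simp only [Finset.mem_filter, Fintype.mem_piFinset, Finset.mem_range]
    exact ⟨fun t => Nat.lt_succ_of_le (hle _), hsum⟩
  · intro m _
    funext t
    simp [Fin.snoc_castSucc]
  · intro g hg
    simp only [Finset.mem_piAntidiag] at hg
    funext t
    refine Fin.lastCases ?_ (fun i => ?_) t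
    · simp only [Fin.snoc_last]
      have : univ.sum g = ∑ i : Fin (n+1), g i := rfl
      rw [this, Fin.sum_univ_castSucc] at hg
      omega
    · simp [Fin.snoc_castSucc]
  · intro m _
    rfl



lemma bn_eq {n : ℕ} (N : ℕ) (m : Fin n → ℕ) (η : Fin n → ℝ) (h : ∑ i, m i ≤ N) :
    bn N m η = (Nat.multinomial univ (Fin.snoc m (N - ∑ i, m i)) : ℝ)
      * ∏ i : Fin (n+1),
          (Fin.snoc η (1 - ∑ i, η i) : Fin (n+1) → ℝ) i ^ (Fin.snoc m (N - ∑ i, m i) : Fin (n+1) → ℕ) i := by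
  set K := N - ∑ i, m i with hK
  set g : Fin (n+1) → ℕ := Fin.snoc m K with hg
  have hsum : ∑ i : Fin (n+1), g i = N := by
    rw [Fin.sum_univ_castSucc]
    simp only [hg, Fin.snoc_castSucc, Fin.snoc_last]
    omega
  have hfac : ∏ i : Fin (n+1), ((g i).factorial : ℝ)
      = (∏ i, ((m i).factorial : ℝ)) * (K.factorial : ℝ) := by
    rw [Fin.prod_univ_castSucc]
    simp [hg]
  have hspec := Nat.multinomial_spec (univ : Finset (Fin (n+1))) g
  have hcast : (∏ i : Fin (n+1), ((g i).factorial : ℝ)) * (Nat.multinomial univ g : ℝ)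
      = (N.factorial : ℝ) := by
    rw [show univ.sum g = ∑ i : Fin (n+1), g i from rfl, hsum] at hspec
    exact_mod_cast congrArg (Nat.cast : ℕ → ℝ) hspec
  have hne : (∏ i : Fin (n+1), ((g i).factorial : ℝ)) ≠ 0 :=
    Finset.prod_ne_zero_iff.mpr fun i _ => Nat.cast_ne_zero.mpr (g i).factorial_ne_zero
  have hmult : (Nat.multinomial univ g : ℝ)
      = (N.factorial : ℝ) / ((∏ i, ((m i).factorial : ℝ)) * (K.factorial : ℝ)) := by
    rw [← hfac, eq_div_iff hne, mul_comm, hcast]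
  have hprod : ∏ i : Fin (n+1),
      (Fin.snoc η (1 - ∑ i, η i) : Fin (n+1) → ℝ) i ^ g i
      = (∏ i, η i ^ m i) * (1 - ∑ i, η i) ^ K := by
    rw [Fin.prod_univ_castSucc]
    simp [hg]
  rw [hmult, hprod, bn]
  ring

lemma sum_bn {n : ℕ} (N : ℕ) (η : Fin n → ℝ) :
    ∑ m ∈ Finset.filter (fun m => ∑ i, m i ≤ N)
        (Fintype.piFinset fun _ : Fin n => Finset.range (N + 1)),
      bn N m η = 1 := by
  set F : Fin (n+1) → ℝ := Fin.snoc η (1 - ∑ i, η i) with hF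
  have hsF : ∑ i : Fin (n+1), F i = 1 := by
    rw [Fin.sum_univ_castSucc]
    simp [hF]
  have h1 : ∑ m ∈ Finset.filter (fun m => ∑ i, m i ≤ N)
        (Fintype.piFinset fun _ : Fin n => Finset.range (N + 1)),
      bn N m η
      = ∑ m ∈ Finset.filter (fun m => ∑ i, m i ≤ N)
        (Fintype.piFinset fun _ : Fin n => Finset.range (N + 1)),
      (fun g : Fin (n+1) → ℕ => (Nat.multinomial univ g : ℝ) * ∏ i, F i ^ g i)
        (Fin.snoc m (N - ∑ i, m i)) := by
    apply Finset.sum_congr rfl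
    intro m hm
    simp only [Finset.mem_filter] at hm
    exact bn_eq N m η hm.2
  rw [h1, transport n N (fun g : Fin (n+1) → ℕ => (Nat.multinomial univ g : ℝ) * ∏ i, F i ^ g i)]
  have := Finset.sum_pow_eq_sum_piAntidiag (univ : Finset (Fin (n+1))) F N
  rw [hsF, one_pow] at this
  rw [← this]

lemma sum_m_bn {n : ℕ} (N : ℕ) (hN : 1 ≤ N) (η : Fin n → ℝ) (j : Fin n) :
    ∑ m ∈ Finset.filter (fun m => ∑ i, m i ≤ N)
        (Fintype.piFinset fun _ : Fin n => Finset.range (N + 1)),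
      (m j : ℝ) * bn N m η = (N : ℝ) * η j := by
  set F : Fin (n+1) → ℝ := Fin.snoc η (1 - ∑ i, η i) with hF
  have hsF : ∑ i : Fin (n+1), F i = 1 := by
    rw [Fin.sum_univ_castSucc]
    simp [hF]
  have h1 : ∑ m ∈ Finset.filter (fun m => ∑ i, m i ≤ N)
        (Fintype.piFinset fun _ : Fin n => Finset.range (N + 1)),
      (m j : ℝ) * bn N m η
      = ∑ m ∈ Finset.filter (fun m => ∑ i, m i ≤ N)
        (Fintype.piFinset fun _ : Fin n => Finset.range (N + 1)),
      (fun g : Fin (n+1) → ℕ =>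
        (g (Fin.castSucc j) : ℝ) * (Nat.multinomial univ g : ℝ) * ∏ i, F i ^ g i)
        (Fin.snoc m (N - ∑ i, m i)) := by
    apply Finset.sum_congr rfl
    intro m hm
    simp only [Finset.mem_filter] at hm
    rw [bn_eq N m η hm.2]
    simp only [Fin.snoc_castSucc]
    ring
  rw [h1, transport n N (fun g : Fin (n+1) → ℕ =>
        (g (Fin.castSucc j) : ℝ) * (Nat.multinomial univ g : ℝ) * ∏ i, F i ^ g i)]
  obtain ⟨M, rfl⟩ : ∃ M, N = M + 1 := ⟨N - 1, by omega⟩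
  rw [antidiag_expect F (Fin.castSucc j) M]
  have := Finset.sum_pow_eq_sum_piAntidiag (univ : Finset (Fin (n+1))) F M
  rw [hsF, one_pow] at this
  rw [← this]
  have hFj : F (Fin.castSucc j) = η j := by simp [hF]
  rw [hFj]
  push_cast
  ring

lemma P_eval {n : ℕ} (N : ℕ) (hN : 1 ≤ N) (u : Fin n → Fin n → ℝ) (m : Fin n → ℕ) (i : Fin n) :
    P N u m (fun t => if t = i then 1 else 0)
      = 1 - (∑ j, (m j : ℝ) * u j i) / N := by
  classical
  set x : Fin n → ℕ := fun t => if t = i then 1 else 0 with hx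
  set E : Fin n → (Fin n → Fin n → ℕ) := fun j a b => if a = j ∧ b = i then 1 else 0 with hE
  set term : (Fin n → Fin n → ℕ) → ℝ := fun k =>
    ((∏ i', poch (-(m i' : ℝ)) (∑ j, k i' j)) * ∏ i', poch (-(x i' : ℝ)) (∑ j, k j i')) /
      ((∏ i', ∏ j, ((k i' j).factorial : ℝ)) * poch (-(N : ℝ)) (∑ i', ∑ j, k i' j)) *
      ∏ i', ∏ j, u i' j ^ k i' j with hterm
  have hrow : ∀ j a, (∑ b, E j a b) = if a = j then 1 else 0 := by
    intro j a
    by_cases h : a = j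
    · subst h
      simp [hE]
    · simp [hE, h]
  have hcolE : ∀ j b, (∑ a, E j a b) = if b = i then 1 else 0 := by
    intro j b
    by_cases h : b = i
    · subst h
      simp [hE]
    · simp [hE, h]
  have htot : ∀ j, (∑ a, ∑ b, E j a b) = 1 := by
    intro j
    simp only [hrow]
    simp
  set T : Finset (Fin n → Fin n → ℕ) :=
    insert (fun _ _ => 0) (Finset.image E univ) with hT
  have hzero_not : (fun _ _ => (0:ℕ)) ∉ Finset.image E univ := by
    intro hmem
    obtain ⟨j, _, hj⟩ := Finset.mem_image.mp hmem
    have := congrFun (congrFun hj j) i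
    simp [hE] at this
  have hsub : T ⊆ Finset.filter (fun k => ∑ i', ∑ j, k i' j ≤ N)
      (Fintype.piFinset fun _ : Fin n => Fintype.piFinset fun _ : Fin n => Finset.range (N + 1)) := by
    intro k hk
    simp only [hT, Finset.mem_insert, Finset.mem_image] at hk
    rcases hk with rfl | ⟨j, _, rfl⟩
    · simp only [Finset.mem_filter, Fintype.mem_piFinset, Finset.mem_range]
      exact ⟨fun a b => Nat.succ_pos N, by simp⟩
    · simp only [Finset.mem_filter, Fintype.mem_piFinset, Finset.mem_range]
      constructor
      · intro a b
        have : E j a b ≤ 1 := by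
          simp only [hE]
          split <;> omega
        omega
      · rw [htot j]
        exact hN
  have hvanish : ∀ k ∈ Finset.filter (fun k => ∑ i', ∑ j, k i' j ≤ N)
      (Fintype.piFinset fun _ : Fin n => Fintype.piFinset fun _ : Fin n => Finset.range (N + 1)),
      k ∉ T → term k = 0 := by
    intro k _ hkT
    by_cases hcol : (∀ t, t ≠ i → (∑ j, k j t) = 0) ∧ (∑ j, k j i) ≤ 1
    · exfalso
      apply hkT
      rcases Nat.le_one_iff_eq_zero_or_eq_one.mp hcol.2 with h0 | h1
      · -- k = 0
        have hk0 : k = fun _ _ => 0 := by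
          funext a b
          by_cases hb : b = i
          · subst hb
            have : k a b ≤ ∑ j, k j b :=
              Finset.single_le_sum (f := fun c => k c b) (fun c _ => Nat.zero_le _) (mem_univ a)
            omega
          · have h := hcol.1 b hb
            have : k a b ≤ ∑ j, k j b :=
              Finset.single_le_sum (f := fun c => k c b) (fun c _ => Nat.zero_le _) (mem_univ a)
            omega
        rw [hk0]
        exact Finset.mem_insert_self _ _
      · -- ∑ j, k j i = 1 : k = E j₀
        obtain ⟨j₀, hj₀⟩ : ∃ j₀, k j₀ i ≠ 0 := by
          by_contra hc
          push_neg at hc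
          simp only [hc] at h1
          simp at h1
        have hj1 : k j₀ i = 1 := by
          have : k j₀ i ≤ ∑ j, k j i :=
            Finset.single_le_sum (f := fun c => k c i) (fun c _ => Nat.zero_le _) (mem_univ j₀)
          omega
        have hrest : ∀ a, a ≠ j₀ → k a i = 0 := by
          intro a ha
          have hsplit := Finset.add_sum_erase univ (fun j => k j i) (mem_univ j₀)
          beta_reduce at hsplit
          have hmem : a ∈ univ.erase j₀ := Finset.mem_erase.mpr ⟨ha, mem_univ a⟩
          have : k a i ≤ ∑ j ∈ univ.erase j₀, k j i :=
            Finset.single_le_sum (f := fun c => k c i) (fun c _ => Nat.zero_le _) hmem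
          omega
        have hkE : k = E j₀ := by
          funext a b
          by_cases hb : b = i
          · subst hb
            by_cases ha : a = j₀
            · subst ha
              simp [hE, hj1]
            · simp [hE, ha, hrest a ha]
          · have h := hcol.1 b hb
            have : k a b ≤ ∑ j, k j b :=
              Finset.single_le_sum (f := fun c => k c b) (fun c _ => Nat.zero_le _) (mem_univ a)
            simp only [hE]
            rw [if_neg (by tauto)]
            omega
        rw [hkE]
        exact Finset.mem_insert_of_mem (Finset.mem_image_of_mem E (mem_univ j₀))
    · -- some poch factor vanishes
      have hBzero : (∏ i', poch (-(x i' : ℝ)) (∑ j, k j i')) = 0 := by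
        push_neg at hcol
        by_cases h1 : ∀ t, t ≠ i → (∑ j, k j t) = 0
        · have h2 := hcol h1
          apply Finset.prod_eq_zero (mem_univ i)
          have hxi : ((x i : ℕ) : ℝ) = 1 := by simp [hx]
          rw [hxi]
          exact poch_neg_one _ (by omega)
        · push_neg at h1
          obtain ⟨t, hti, htne⟩ := h1
          apply Finset.prod_eq_zero (mem_univ t)
          have hxt : ((x t : ℕ) : ℝ) = 0 := by simp [hx, hti]
          rw [hxt, neg_zero]
          exact poch_z _ (by omega)
      rw [hterm]
      simp only [hBzero, mul_zero, zero_div, zero_mul]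
  have hsum_T : P N u m x = ∑ k ∈ T, term k := by
    rw [P]
    exact (Finset.sum_subset hsub hvanish).symm
  have hinj : ∀ a ∈ (univ : Finset (Fin n)), ∀ b ∈ univ, E a = E b → a = b := by
    intro a _ b _ hab
    by_contra hne
    have h := congrFun (congrFun hab a) i
    simp [hE, hne] at h
  have hterm0 : term (fun _ _ => 0) = 1 := by
    rw [hterm]
    simp [poch_zero]
  have htermE : ∀ j, term (E j) = -((m j : ℝ) * u j i) / N := by
    intro j
    rw [hterm]
    beta_reduce
    have hA : (∏ i', poch (-(m i' : ℝ)) (∑ b, E j i' b)) = -(m j : ℝ) := by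
      rw [Finset.prod_eq_single_of_mem j (mem_univ j)]
      · rw [hrow j j, if_pos rfl, poch_one]
      · intro t _ htj
        rw [hrow j t, if_neg htj, poch_zero]
    have hB : (∏ i', poch (-(x i' : ℝ)) (∑ a, E j a i')) = -1 := by
      rw [Finset.prod_eq_single_of_mem i (mem_univ i)]
      · rw [hcolE j i, if_pos rfl, poch_one]
        simp [hx]
      · intro t _ hti
        rw [hcolE j t, if_neg hti, poch_zero]
    have hC : (∏ i', ∏ b, ((E j i' b).factorial : ℝ)) = 1 := by
      apply Finset.prod_eq_one
      intro a _
      apply Finset.prod_eq_one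
      intro b _
      simp only [hE]
      split <;> simp
    have hD : poch (-(N : ℝ)) (∑ a, ∑ b, E j a b) = -(N : ℝ) := by
      rw [htot j, poch_one]
    have hU : (∏ a, ∏ b, u a b ^ E j a b) = u j i := by
      rw [Finset.prod_eq_single_of_mem j (mem_univ j)]
      · rw [Finset.prod_eq_single_of_mem i (mem_univ i)]
        · simp [hE]
        · intro b _ hbi
          simp [hE, hbi]
      · intro a _ haj
        apply Finset.prod_eq_one
        intro b _
        simp [hE, haj]
    rw [hA, hB, hC, hD, hU]
    have hNne : (N : ℝ) ≠ 0 := Nat.cast_ne_zero.mpr (by omega)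
    rw [one_mul, div_neg, neg_mul_neg]
    ring
  rw [hsum_T, hT, Finset.sum_insert hzero_not, Finset.sum_image hinj, hterm0]
  have : ∑ j, term (E j) = ∑ j, -((m j : ℝ) * u j i) / N := by
    exact Finset.sum_congr rfl fun j _ => htermE j
  rw [this]
  have h2 : (∑ j, -((m j : ℝ) * u j i) / N) = -((∑ j, (m j : ℝ) * u j i) / N) := by
    simp only [neg_div]
    rw [Finset.sum_neg_distrib, ← Finset.sum_div]
  rw [h2]
  ring


/-- Necessary condition of dual orthogonality (3.6): if
`∑_m b_n(m;N;η̄) P_m(x) = 0` for every nonzero `x` with `∑ x_i ≤ N`,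
then `∑_j η̄_j u_{ji} = 1` for every `i`. -/
theorem stmt_8 (N n : ℕ) (hN : 1 ≤ N) (hn : 1 ≤ n)
    (u : Fin n → Fin n → ℝ) (ηb : Fin n → ℝ)
    (hηb : ∀ j, 0 ≤ ηb j) (hηbs : ∑ j, ηb j ≤ 1)
    (horth : ∀ x : Fin n → ℕ, x ≠ 0 → ∑ i, x i ≤ N →
      ∑ m ∈ Finset.filter (fun m => ∑ i, m i ≤ N)
          (Fintype.piFinset fun _ : Fin n => Finset.range (N + 1)),
        bn N m ηb * P N u m x = 0) :
    ∀ i, ∑ j, ηb j * u j i = 1 := by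
  intro i
  set x : Fin n → ℕ := fun t => if t = i then 1 else 0 with hx
  have hx0 : x ≠ 0 := by
    intro h
    have := congrFun h i
    simp [hx] at this
  have hxs : ∑ t, x t ≤ N := by
    have : ∑ t, x t = 1 := by simp [hx]
    omega
  have key := horth x hx0 hxs
  have hNne : (N : ℝ) ≠ 0 := Nat.cast_ne_zero.mpr (by omega)
  have hP : ∀ m : Fin n → ℕ, bn N m ηb * P N u m x
      = bn N m ηb - ∑ j, bn N m ηb * (m j : ℝ) * u j i / N := by
    intro m
    rw [hx, P_eval N hN u m i, mul_sub, mul_one]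
    congr 1
    rw [Finset.sum_div, Finset.mul_sum]
    exact Finset.sum_congr rfl fun j _ => by ring
  rw [Finset.sum_congr rfl (fun m _ => hP m), Finset.sum_sub_distrib, sum_bn,
    Finset.sum_comm] at key
  have hswap : ∀ j : Fin n, ∑ m ∈ Finset.filter (fun m => ∑ t, m t ≤ N)
      (Fintype.piFinset fun _ : Fin n => Finset.range (N + 1)),
      bn N m ηb * (m j : ℝ) * u j i / N = ηb j * u j i := by
    intro j
    have h1 : ∑ m ∈ Finset.filter (fun m => ∑ t, m t ≤ N)
        (Fintype.piFinset fun _ : Fin n => Finset.range (N + 1)),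
        bn N m ηb * (m j : ℝ) * u j i / N
        = (∑ m ∈ Finset.filter (fun m => ∑ t, m t ≤ N)
        (Fintype.piFinset fun _ : Fin n => Finset.range (N + 1)),
          (m j : ℝ) * bn N m ηb) * (u j i / N) := by
      rw [Finset.sum_mul]
      exact Finset.sum_congr rfl fun m _ => by ring
    rw [h1, sum_m_bn N hN ηb j]
    field_simp
  rw [Finset.sum_congr rfl (fun j _ => hswap j)] at key
  linarith [key]
end

section
/- Let N ≥ 1 and n ≥ 1 be integers, u an n×n real matrix, and η ∈ ℝⁿ with η_j ≥ 0 and η₁+⋯+η_n ≤ 1. Assume Σ_{j=1}^n η_j u_{rj} = 1 for all r = 1,…,n, and Σ_{j=1}^n η_j u_{rj}u_{sj} = 1 for all r ≠ s. Set Δ_j := Σ_{s=1}^n η_s u_{js}² − 1. Then for all m, m' ∈ ℕⁿ with Σm_k ≤ N and Σm'_k ≤ N: Σ_x b_n(x;N;η)·P_m(x)·P_{m'}(x) = [(Σ_k m'_k − N)_{N−Σ_j m_j} · ∏_{k=1}^n (−m'_k)_{m_k} / (−N)_N] · ∏_{j=1}^n Δ_j^{m_j}, where the sum runs over all x ∈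 ℕⁿ with x₁+⋯+x_n ≤ N. -/
open Finset

lemma poch_neg_nat (x r : ℕ) : poch (-(x:ℝ)) r = (-1)^r * (x.descFactorial r : ℝ) := by
  induction r with
  | zero => simp [poch]
  | succ r ih =>
    rw [poch, ascPochhammer_succ_right, Polynomial.eval_mul]
    rw [show Polynomial.eval (-(x:ℝ)) (Polynomial.X + (r : Polynomial ℝ)) = (r:ℝ) - x by
      simp; ring]
    rw [← poch, ih, Nat.descFactorial_succ]
    rcases le_or_gt r x with h | h
    · push_cast [h]; ring
    · rw [Nat.descFactorial_eq_zero_iff_lt.mpr h]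
      push_cast
      ring_nf


def SM (n M : ℕ) : Finset (Fin n → ℕ) :=
  Finset.filter (fun y => ∑ i, y i ≤ M)
    (Fintype.piFinset fun _ : Fin n => Finset.range (M + 1))
noncomputable def cc {n : ℕ} (M : ℕ) (y : Fin n → ℕ) : ℝ :=
  (M.factorial : ℝ) / ((∏ i, ((y i).factorial : ℝ)) * ((M - ∑ i, y i).factorial : ℝ))
lemma mem_SM {n M : ℕ} {y : Fin n → ℕ} : y ∈ SM n M ↔ (∀ i, y i ≤ M) ∧ ∑ i, y i ≤ M := by
  simp only [SM, mem_filter, Fintype.mem_piFinset, mem_range, Nat.lt_succ_iff]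
lemma mem_SM_of_sum {n M : ℕ} {y : Fin n → ℕ} (h : ∑ i, y i ≤ M) : y ∈ SM n M :=
  mem_SM.2 ⟨fun i => le_trans (Finset.single_le_sum (fun i _ => Nat.zero_le (y i)) (mem_univ i)) h, h⟩

lemma multi_thm {n : ℕ} (M : ℕ) (a : Fin n → ℝ) (b : ℝ) :
    ∑ y ∈ SM n M, cc M y * (∏ i, a i ^ y i) * b ^ (M - ∑ i, y i)
      = (∑ i, a i + b) ^ M := by
  classical
  have key : (∑ o : Option (Fin n), (Option.elim o b a)) ^ M
      = ∑ k ∈ Finset.piAntidiag Finset.univ M,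
          (Nat.multinomial Finset.univ k : ℝ) * ∏ o : Option (Fin n), (Option.elim o b a) ^ k o :=
    Finset.sum_pow_eq_sum_piAntidiag _ _ _
  rw [show (∑ i, a i + b) = ∑ o : Option (Fin n), Option.elim o b a by
    rw [Fintype.sum_option]; simp [add_comm]]
  rw [key]
  refine (Finset.sum_nbij' (fun k => fun i => k (some i))
    (fun y => fun o => Option.elim o (M - ∑ i, y i) y) ?_ ?_ ?_ ?_ ?_).symm
  · intro k hk
    rw [Finset.mem_piAntidiag] at hk
    apply mem_SM_of_sum
    show ∑ i, k (some i) ≤ M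
    have := hk.1
    rw [Fintype.sum_option] at this
    omega
  · intro y hy
    rw [mem_SM] at hy
    rw [Finset.mem_piAntidiag]
    refine ⟨?_, fun o _ => mem_univ o⟩
    rw [Fintype.sum_option]
    simp only [Option.elim]
    have := hy.2
    omega
  · intro k hk
    rw [Finset.mem_piAntidiag] at hk
    have h1 := hk.1
    rw [Fintype.sum_option] at h1
    funext o
    cases o with
    | none => simp only [Option.elim]; omega
    | some i => simp only [Option.elim]
  · intro y _
    rfl
  · intro k hk
    rw [Finset.mem_piAntidiag] at hk
    have h1 := hk.1
    rw [Fintype.sum_option] at h1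
    have hs : ∑ i, k (some i) ≤ M := by omega
    have hnone : k none = M - ∑ i, k (some i) := by omega
    have hmul : (Nat.multinomial Finset.univ k : ℝ)
        = (M.factorial : ℝ) / ((∏ i, ((k (some i)).factorial : ℝ))
            * (((M - ∑ i, k (some i))).factorial : ℝ)) := by
      rw [eq_div_iff (by positivity)]
      have hspec := Nat.multinomial_spec Finset.univ k
      rw [Fintype.prod_option, hk.1, hnone] at hspec
      push_cast [← hspec]
      ring
    rw [Fintype.prod_option, hmul]
    simp only [Option.elim, cc]
    rw [hnone]
    ring


lemma summ {n : ℕ} (N : ℕ) (z : Fin n → ℝ) (r : Fin n → ℕ) :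
    ∑ m ∈ SM n N, cc N m * (∏ i, z i ^ m i) * (∏ i, ((m i).descFactorial (r i) : ℝ))
      = (N.descFactorial (∑ i, r i) : ℝ) * (∏ i, z i ^ r i)
          * (∑ i, z i + 1) ^ (N - ∑ i, r i) := by
  classical
  by_cases hr : ∑ i, r i ≤ N
  · have hvan : ∀ m ∈ SM n N,
        cc N m * (∏ i, z i ^ m i) * (∏ i, ((m i).descFactorial (r i) : ℝ)) ≠ 0
          → (∀ i, r i ≤ m i) := by
      intro m hm hne
      by_contra hc
      push_neg at hc
      obtain ⟨i, hi⟩ := hc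
      apply hne
      have h0 : ((m i).descFactorial (r i) : ℝ) = 0 := by
        exact_mod_cast congrArg (Nat.cast (R := ℝ)) (Nat.descFactorial_eq_zero_iff_lt.mpr hi)
      rw [Finset.prod_eq_zero (f := fun i => (((m i).descFactorial (r i)) : ℝ)) (mem_univ i) h0]
      ring
    rw [← Finset.sum_filter_of_ne hvan]
    have hstep : ∑ m ∈ Finset.filter (fun m => ∀ i, r i ≤ m i) (SM n N),
          cc N m * (∏ i, z i ^ m i) * (∏ i, ((m i).descFactorial (r i) : ℝ))
        = ∑ ρ ∈ SM n (N - ∑ i, r i),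
            ((N.descFactorial (∑ i, r i) : ℝ) * (∏ i, z i ^ r i))
              * (cc (N - ∑ i, r i) ρ * (∏ i, z i ^ ρ i)
                  * (1:ℝ) ^ ((N - ∑ i, r i) - ∑ i, ρ i)) := by
      refine Finset.sum_nbij' (fun m => fun i => m i - r i) (fun ρ => fun i => ρ i + r i)
        ?_ ?_ ?_ ?_ ?_
      · intro m hm
        rw [mem_filter, mem_SM] at hm
        apply mem_SM_of_sum
        show ∑ i, (m i - r i) ≤ N - ∑ i, r i
        have h1 : ∑ i, (m i - r i) + ∑ i, r i = ∑ i, m i := by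
          rw [← Finset.sum_add_distrib]
          exact Finset.sum_congr rfl fun i _ => by have := hm.2 i; omega
        have := hm.1.2
        omega
      · intro ρ hρ
        rw [mem_SM] at hρ
        rw [mem_filter]
        constructor
        · apply mem_SM_of_sum
          show ∑ i, (ρ i + r i) ≤ N
          rw [Finset.sum_add_distrib]
          have := hρ.2
          omega
        · intro i
          show r i ≤ ρ i + r i
          omega
      · intro m hm
        rw [mem_filter] at hm
        funext i
        show (m i - r i) + r i = m i
        have := hm.2 i
        omega
      · intro ρ _
        funext i
        show (ρ i + r i) - r i = ρ i
        omega
      · intro m hm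
        rw [mem_filter, mem_SM] at hm
        have hle : ∀ i, r i ≤ m i := hm.2
        have hS : ∑ i, m i ≤ N := hm.1.2
        show cc N m * (∏ i, z i ^ m i) * (∏ i, ((m i).descFactorial (r i) : ℝ))
          = ((N.descFactorial (∑ i, r i) : ℝ) * (∏ i, z i ^ r i))
              * (cc (N - ∑ i, r i) (fun i => m i - r i) * (∏ i, z i ^ (m i - r i))
                  * (1:ℝ) ^ ((N - ∑ i, r i) - ∑ i, (m i - r i)))
        have hsum : ∑ i, (m i - r i) + ∑ i, r i = ∑ i, m i := by
          rw [← Finset.sum_add_distrib]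
          exact Finset.sum_congr rfl fun i _ => by have := hle i; omega
        have hzm : (∏ i, z i ^ m i) = (∏ i, z i ^ (m i - r i)) * ∏ i, z i ^ r i := by
          rw [← Finset.prod_mul_distrib]
          refine Finset.prod_congr rfl fun i _ => ?_
          rw [← pow_add]
          congr 1
          have := hle i; omega
        have hfac : (∏ i, ((m i).factorial : ℝ))
            = (∏ i, ((m i).descFactorial (r i) : ℝ)) * ∏ i, (((m i - r i)).factorial : ℝ) := by
          rw [← Finset.prod_mul_distrib]
          refine Finset.prod_congr rfl fun i _ => ?_
          have h := Nat.factorial_mul_descFactorial (hle i)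
          have : (m i).factorial = (m i).descFactorial (r i) * (m i - r i).factorial := by
            rw [← h]; ring
          exact_mod_cast congrArg (Nat.cast (R := ℝ)) this
        have hNfac : (N.factorial : ℝ)
            = (N.descFactorial (∑ i, r i) : ℝ) * ((N - ∑ i, r i).factorial : ℝ) := by
          have h := Nat.factorial_mul_descFactorial hr
          have : N.factorial = N.descFactorial (∑ i, r i) * (N - ∑ i, r i).factorial := by
            rw [← h]; ring
          exact_mod_cast congrArg (Nat.cast (R := ℝ)) this
        have hdFne : (∏ i, ((m i).descFactorial (r i) : ℝ)) ≠ 0 := by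
          apply Finset.prod_ne_zero_iff.mpr
          intro i _
          have h1 : (m i).descFactorial (r i) ≠ 0 := by
            rw [Ne, Nat.descFactorial_eq_zero_iff_lt]
            have := hle i; omega
          exact Nat.cast_ne_zero.mpr h1
        have hρfne : (∏ i, (((m i - r i)).factorial : ℝ)) ≠ 0 := by
          apply Finset.prod_ne_zero_iff.mpr
          intro i _
          exact Nat.cast_ne_zero.mpr (Nat.factorial_ne_zero _)
        have hEfne : (((N - ∑ i, r i) - ∑ i, (m i - r i)).factorial : ℝ) ≠ 0 :=
          Nat.cast_ne_zero.mpr (Nat.factorial_ne_zero _)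
        simp only [cc]
        rw [hzm, hfac, hNfac]
        rw [show N - ∑ i, m i = (N - ∑ i, r i) - ∑ i, (m i - r i) by omega]
        field_simp
        ring
    rw [hstep, ← Finset.mul_sum, multi_thm]
  · push_neg at hr
    rw [show (N.descFactorial (∑ i, r i) : ℝ) = 0 by
      exact_mod_cast congrArg (Nat.cast (R := ℝ)) (Nat.descFactorial_eq_zero_iff_lt.mpr hr)]
    rw [Finset.sum_eq_zero]
    · ring
    intro m hm
    rw [mem_SM] at hm
    have hex : ∃ i, m i < r i := by
      by_contra hc
      push_neg at hc
      have : ∑ i, r i ≤ ∑ i, m i := Finset.sum_le_sum fun i _ => hc i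
      omega
    obtain ⟨i, hi⟩ := hex
    have h0 : ((m i).descFactorial (r i) : ℝ) = 0 := by
      exact_mod_cast congrArg (Nat.cast (R := ℝ)) (Nat.descFactorial_eq_zero_iff_lt.mpr hi)
    rw [Finset.prod_eq_zero (f := fun i => (((m i).descFactorial (r i)) : ℝ)) (mem_univ i) h0]
    ring

/-- Column expansion lemma. -/
lemma col_lemma {n : ℕ} (N e : ℕ) (he : e ≤ N) (a : Fin n → ℝ) (b : ℝ) :
    (∑ i, a i + b) ^ e
      = ∑ c ∈ Fintype.piFinset (fun _ : Fin n => Finset.range (N + 1)),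
          (e.descFactorial (∑ i, c i) : ℝ) * (∏ i, a i ^ c i)
            * (∏ i, ((c i).factorial : ℝ))⁻¹ * b ^ (e - ∑ i, c i) := by
  classical
  rw [← multi_thm e a b]
  refine Eq.trans (Finset.sum_congr rfl fun c hc => ?_) (Finset.sum_subset ?_ ?_)
  · rw [mem_SM] at hc
    have hfac : (e.factorial : ℝ)
        = (e.descFactorial (∑ i, c i) : ℝ) * ((e - ∑ i, c i).factorial : ℝ) := by
      have h := Nat.factorial_mul_descFactorial hc.2
      have : e.factorial = e.descFactorial (∑ i, c i) * (e - ∑ i, c i).factorial := by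
        rw [← h]; ring
      exact_mod_cast congrArg (Nat.cast (R := ℝ)) this
    simp only [cc]
    rw [hfac]
    have h1 : (∏ i, ((c i).factorial : ℝ)) ≠ 0 :=
      Finset.prod_ne_zero_iff.mpr fun i _ => Nat.cast_ne_zero.mpr (Nat.factorial_ne_zero _)
    have h2 : ((e - ∑ i, c i).factorial : ℝ) ≠ 0 := Nat.cast_ne_zero.mpr (Nat.factorial_ne_zero _)
    field_simp
  · intro c hc
    rw [mem_SM] at hc
    rw [Fintype.mem_piFinset]
    intro i
    rw [Finset.mem_range, Nat.lt_succ_iff]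
    exact le_trans (hc.1 i) he
  · intro c _ hc
    have hgt : e < ∑ i, c i := by
      by_contra hle
      push_neg at hle
      exact hc (mem_SM_of_sum hle)
    rw [show (e.descFactorial (∑ i, c i) : ℝ) = 0 by
      exact_mod_cast congrArg (Nat.cast (R := ℝ)) (Nat.descFactorial_eq_zero_iff_lt.mpr hgt)]
    ring

lemma GF_B {n : ℕ} (N : ℕ) (u : Fin n → Fin n → ℝ) (z : Fin n → ℝ) (x : Fin n → ℕ)
    (hx : x ∈ SM n N) :
    ∑ k ∈ (Fintype.piFinset fun _ : Fin n => Fintype.piFinset fun _ : Fin n => Finset.range (N + 1)),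
        (∏ j, ((x j).descFactorial (∑ i, k i j) : ℝ))
          * (∏ i, ∏ j, (-(z i * u i j)) ^ k i j)
          * (∏ i, ∏ j, ((k i j).factorial : ℝ))⁻¹
          * (1 + ∑ i, z i) ^ (N - ∑ i, ∑ j, k i j)
      = (1 + ∑ i, z i) ^ (N - ∑ j, x j) * ∏ j, (1 + ∑ i, z i - ∑ i, z i * u i j) ^ x j := by
  classical
  rw [mem_SM] at hx
  have hbase : ∀ j : Fin n, (1 + ∑ i, z i - ∑ i, z i * u i j)
      = (∑ i, (-(z i * u i j)) + (1 + ∑ i, z i)) := by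
    intro j
    rw [Finset.sum_neg_distrib]
    ring
  rw [Finset.prod_congr rfl fun j _ => congrArg (· ^ x j) (hbase j)]
  rw [Finset.prod_congr rfl fun j _ => col_lemma N (x j) (hx.1 j) _ _]
  rw [Finset.prod_univ_sum]
  rw [Finset.mul_sum]
  refine Finset.sum_nbij' (fun k => fun j i => k i j) (fun κ => fun i j => κ j i)
    ?_ ?_ ?_ ?_ ?_
  · intro k hk
    rw [Fintype.mem_piFinset] at hk ⊢
    intro j
    rw [Fintype.mem_piFinset]
    intro i
    have := hk i
    rw [Fintype.mem_piFinset] at this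
    exact this j
  · intro κ hκ
    rw [Fintype.mem_piFinset] at hκ ⊢
    intro i
    rw [Fintype.mem_piFinset]
    intro j
    have := hκ j
    rw [Fintype.mem_piFinset] at this
    exact this i
  · intro k _; rfl
  · intro κ _; rfl
  · intro k _
    show (∏ j, ((x j).descFactorial (∑ i, k i j) : ℝ))
          * (∏ i, ∏ j, (-(z i * u i j)) ^ k i j)
          * (∏ i, ∏ j, ((k i j).factorial : ℝ))⁻¹
          * (1 + ∑ i, z i) ^ (N - ∑ i, ∑ j, k i j)
      = (1 + ∑ i, z i) ^ (N - ∑ j, x j)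
          * ∏ j, (((x j).descFactorial (∑ i, k i j) : ℝ)
              * (∏ i, (-(z i * u i j)) ^ k i j)
              * (∏ i, ((k i j).factorial : ℝ))⁻¹
              * (1 + ∑ i, z i) ^ (x j - ∑ i, k i j))
    by_cases hcol : ∀ j, ∑ i, k i j ≤ x j
    · rw [Finset.prod_mul_distrib, Finset.prod_mul_distrib, Finset.prod_mul_distrib]
      rw [Finset.prod_pow_eq_pow_sum]
      rw [show (∏ j, ∏ i, (-(z i * u i j)) ^ k i j) = ∏ i, ∏ j, (-(z i * u i j)) ^ k i j from
        Finset.prod_comm]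
      rw [show (∏ j, (∏ i, ((k i j).factorial : ℝ))⁻¹)
          = (∏ i, ∏ j, ((k i j).factorial : ℝ))⁻¹ by
        simp only [← Finset.prod_inv_distrib]
        exact Finset.prod_comm]
      have hsub : ∑ j, (x j - ∑ i, k i j) = (∑ j, x j) - ∑ j, ∑ i, k i j := by
        rw [Finset.sum_tsub_distrib]
        intro j _
        exact hcol j
      have hT : ∑ j, ∑ i, k i j = ∑ i, ∑ j, k i j := Finset.sum_comm
      have hTle : ∑ j, ∑ i, k i j ≤ ∑ j, x j := Finset.sum_le_sum fun j _ => hcol j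
      rw [hsub, hT]
      rw [show (1 + ∑ i, z i) ^ (N - ∑ j, x j)
            * ((∏ j, ((x j).descFactorial (∑ i, k i j) : ℝ))
              * (∏ i, ∏ j, (-(z i * u i j)) ^ k i j)
              * (∏ i, ∏ j, ((k i j).factorial : ℝ))⁻¹
              * (1 + ∑ i, z i) ^ ((∑ j, x j) - ∑ i, ∑ j, k i j))
          = (∏ j, ((x j).descFactorial (∑ i, k i j) : ℝ))
              * (∏ i, ∏ j, (-(z i * u i j)) ^ k i j)
              * (∏ i, ∏ j, ((k i j).factorial : ℝ))⁻¹
              * ((1 + ∑ i, z i) ^ (N - ∑ j, x j)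
                  * (1 + ∑ i, z i) ^ ((∑ j, x j) - ∑ i, ∑ j, k i j)) from by ring]
      rw [← pow_add]
      congr 2
      rw [← hT]
      omega
    · push_neg at hcol
      obtain ⟨j, hj⟩ := hcol
      have h0 : ((x j).descFactorial (∑ i, k i j) : ℝ) = 0 := by
        exact_mod_cast congrArg (Nat.cast (R := ℝ)) (Nat.descFactorial_eq_zero_iff_lt.mpr hj)
      rw [Finset.prod_eq_zero (f := fun j => (((x j).descFactorial (∑ i, k i j)) : ℝ))
        (mem_univ j) h0]
      rw [Finset.prod_eq_zero
        (f := fun j => ((x j).descFactorial (∑ i, k i j) : ℝ)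
              * (∏ i, (-(z i * u i j)) ^ k i j)
              * (∏ i, ((k i j).factorial : ℝ))⁻¹
              * (1 + ∑ i, z i) ^ (x j - ∑ i, k i j)) (mem_univ j)
        (show ((x j).descFactorial (∑ i, k i j) : ℝ)
              * (∏ i, (-(z i * u i j)) ^ k i j)
              * (∏ i, ((k i j).factorial : ℝ))⁻¹
              * (1 + ∑ i, z i) ^ (x j - ∑ i, k i j) = 0 by rw [h0]; ring)]
      ring

lemma GF_A {n : ℕ} (N : ℕ) (u : Fin n → Fin n → ℝ) (z : Fin n → ℝ) (x : Fin n → ℕ)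
    (hx : x ∈ SM n N) :
    ∑ m ∈ SM n N, cc N m * (∏ i, z i ^ m i) * P N u m x
      = ∑ k ∈ (Fintype.piFinset fun _ : Fin n => Fintype.piFinset fun _ : Fin n => Finset.range (N + 1)),
          (∏ j, ((x j).descFactorial (∑ i, k i j) : ℝ))
            * (∏ i, ∏ j, (-(z i * u i j)) ^ k i j)
            * (∏ i, ∏ j, ((k i j).factorial : ℝ))⁻¹
            * (1 + ∑ i, z i) ^ (N - ∑ i, ∑ j, k i j) := by
  classical
  rw [mem_SM] at hx
  simp only [P, Finset.mul_sum]
  rw [Finset.sum_comm]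
  refine Eq.trans (Finset.sum_congr rfl fun k hk => ?_) (Finset.sum_subset (Finset.filter_subset _ _) ?_)
  · -- per k with ∑∑ k ≤ N
    rw [Finset.mem_filter] at hk
    have hTk : ∑ i, ∑ j, k i j ≤ N := hk.2
    have hsignm : ∀ m : Fin n → ℕ, (∏ i, poch (-(m i : ℝ)) (∑ j, k i j))
        = (-1 : ℝ) ^ (∑ i, ∑ j, k i j) * ∏ i, ((m i).descFactorial (∑ j, k i j) : ℝ) := by
      intro m
      rw [Finset.prod_congr rfl fun i _ => poch_neg_nat (m i) (∑ j, k i j)]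
      rw [Finset.prod_mul_distrib, Finset.prod_pow_eq_pow_sum]
    have hsignx : (∏ i, poch (-(x i : ℝ)) (∑ j, k j i))
        = (-1 : ℝ) ^ (∑ i, ∑ j, k i j) * ∏ i, ((x i).descFactorial (∑ j, k j i) : ℝ) := by
      rw [Finset.prod_congr rfl fun i _ => poch_neg_nat (x i) (∑ j, k j i)]
      rw [Finset.prod_mul_distrib, Finset.prod_pow_eq_pow_sum]
      rw [show ∑ i, ∑ j, k j i = ∑ i, ∑ j, k i j from Finset.sum_comm]
    have hsignN : poch (-(N : ℝ)) (∑ i, ∑ j, k i j)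
        = (-1 : ℝ) ^ (∑ i, ∑ j, k i j) * (N.descFactorial (∑ i, ∑ j, k i j) : ℝ) :=
      poch_neg_nat N _
    have hdFN : (N.descFactorial (∑ i, ∑ j, k i j) : ℝ) ≠ 0 := by
      rw [Ne, Nat.cast_eq_zero, Nat.descFactorial_eq_zero_iff_lt]
      omega
    have hkfac : (∏ i, ∏ j, ((k i j).factorial : ℝ)) ≠ 0 :=
      Finset.prod_ne_zero_iff.mpr fun i _ =>
        Finset.prod_ne_zero_iff.mpr fun j _ => Nat.cast_ne_zero.mpr (Nat.factorial_ne_zero _)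
    have hfold : (∏ i, ∏ j, (-(z i * u i j)) ^ k i j)
        = (-1 : ℝ) ^ (∑ i, ∑ j, k i j) * (∏ i, z i ^ (∑ j, k i j))
            * ∏ i, ∏ j, u i j ^ k i j := by
      have h1 : ∀ i j : Fin n, (-(z i * u i j)) ^ k i j
          = (-1 : ℝ) ^ k i j * (z i ^ k i j * u i j ^ k i j) := by
        intro i j
        rw [show -(z i * u i j) = (-1) * (z i * u i j) by ring, mul_pow, mul_pow]
      rw [Finset.prod_congr rfl fun i _ => Finset.prod_congr rfl fun j _ => h1 i j]
      simp only [Finset.prod_mul_distrib]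
      rw [Finset.prod_congr rfl fun i _ => Finset.prod_pow_eq_pow_sum univ (fun j => k i j) (-1 : ℝ),
        Finset.prod_pow_eq_pow_sum,
        Finset.prod_congr rfl fun i _ => Finset.prod_pow_eq_pow_sum univ (fun j => k i j) (z i)]
      ring
    have hstep : ∀ m : Fin n → ℕ,
        cc N m * (∏ i, z i ^ m i)
          * (((∏ i, poch (-(m i : ℝ)) (∑ j, k i j)) * ∏ i, poch (-(x i : ℝ)) (∑ j, k j i)) /
              ((∏ i, ∏ j, ((k i j).factorial : ℝ)) * poch (-(N : ℝ)) (∑ i, ∑ j, k i j)) *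
              ∏ i, ∏ j, u i j ^ k i j)
        = (cc N m * (∏ i, z i ^ m i) * ∏ i, ((m i).descFactorial (∑ j, k i j) : ℝ))
            * ((-1 : ℝ) ^ (∑ i, ∑ j, k i j) * (∏ i, ((x i).descFactorial (∑ j, k j i) : ℝ))
                * (∏ i, ∏ j, u i j ^ k i j)
                * ((∏ i, ∏ j, ((k i j).factorial : ℝ))
                    * (N.descFactorial (∑ i, ∑ j, k i j) : ℝ))⁻¹) := by
      intro m
      rw [hsignm m, hsignx, hsignN]
      rcases Nat.even_or_odd (∑ i, ∑ j, k i j) with hev | hod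
      · rw [Even.neg_one_pow hev]
        field_simp
      · rw [Odd.neg_one_pow hod]
        field_simp
    rw [Finset.sum_congr rfl fun m _ => hstep m]
    rw [← Finset.sum_mul]
    rw [summ N z (fun i => ∑ j, k i j)]
    have hxc : (∏ i, ((x i).descFactorial (∑ j, k j i) : ℝ))
        = ∏ j, ((x j).descFactorial (∑ i, k i j) : ℝ) := rfl
    rw [hxc, hfold]
    rw [show (∑ i, z i + 1) = (1 + ∑ i, z i) by ring]
    rcases Nat.even_or_odd (∑ i, ∑ j, k i j) with hev | hod
    · rw [Even.neg_one_pow hev]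
      field_simp
    · rw [Odd.neg_one_pow hod]
      field_simp
  · -- vanishing outside the filter
    intro k hkmem hknot
    rw [Finset.mem_filter, not_and] at hknot
    have hgt : ¬ (∑ i, ∑ j, k i j ≤ N) := hknot hkmem
    have hex : ∃ j, x j < ∑ i, k i j := by
      by_contra hc
      push_neg at hc
      have h1 : ∑ j, ∑ i, k i j ≤ ∑ j, x j := Finset.sum_le_sum fun j _ => hc j
      rw [show ∑ j, ∑ i, k i j = ∑ i, ∑ j, k i j from Finset.sum_comm] at h1
      exact hgt (le_trans h1 hx.2)
    obtain ⟨j, hj⟩ := hex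
    have h0 : ((x j).descFactorial (∑ i, k i j) : ℝ) = 0 := by
      exact_mod_cast congrArg (Nat.cast (R := ℝ)) (Nat.descFactorial_eq_zero_iff_lt.mpr hj)
    rw [Finset.prod_eq_zero (f := fun j => (((x j).descFactorial (∑ i, k i j)) : ℝ)) (mem_univ j) h0]
    ring

lemma GF {n : ℕ} (N : ℕ) (u : Fin n → Fin n → ℝ) (z : Fin n → ℝ) (x : Fin n → ℕ)
    (hx : x ∈ SM n N) :
    ∑ m ∈ SM n N, cc N m * (∏ i, z i ^ m i) * P N u m x
      = (1 + ∑ i, z i) ^ (N - ∑ j, x j) * ∏ j, (1 + ∑ i, z i - ∑ i, z i * u i j) ^ x j :=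
  (GF_A N u z x hx).trans (GF_B N u z x hx)

lemma scalar_id {n : ℕ} (u : Fin n → Fin n → ℝ) (η : Fin n → ℝ)
    (h1 : ∀ r, ∑ j, η j * u r j = 1)
    (h2 : ∀ r s, r ≠ s → ∑ j, η j * u r j * u s j = 1)
    (z w : Fin n → ℝ) :
    (∑ j, η j * ((1 + ∑ i, z i - ∑ i, z i * u i j) * (1 + ∑ i, w i - ∑ i, w i * u i j)))
        + (1 - ∑ j, η j) * ((1 + ∑ i, z i) * (1 + ∑ i, w i))
      = 1 + ∑ i, z i * w i * ((∑ s, η s * u i s ^ 2) - 1) := by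
  classical
  have hlin : ∀ v : Fin n → ℝ, ∑ j, η j * (∑ i, v i * u i j) = ∑ i, v i := by
    intro v
    have h : ∀ j, η j * (∑ i, v i * u i j) = ∑ i, v i * (η j * u i j) := by
      intro j
      rw [Finset.mul_sum]
      exact Finset.sum_congr rfl fun i _ => by ring
    rw [Finset.sum_congr rfl fun j _ => h j, Finset.sum_comm]
    refine Finset.sum_congr rfl fun i _ => ?_
    rw [← Finset.mul_sum, h1 i, mul_one]
  have hS : ∀ i i' : Fin n, ∑ j, η j * u i j * u i' j
      = 1 + (if i = i' then ((∑ s, η s * u i s ^ 2) - 1) else 0) := by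
    intro i i'
    by_cases h : i = i'
    · subst h
      rw [if_pos rfl]
      rw [show (1 : ℝ) + ((∑ s, η s * u i s ^ 2) - 1) = ∑ s, η s * u i s ^ 2 by ring]
      exact Finset.sum_congr rfl fun j _ => by ring
    · rw [if_neg h, h2 i i' h]
      ring
  have hquad : ∑ j, η j * ((∑ i, z i * u i j) * (∑ i, w i * u i j))
      = (∑ i, z i) * (∑ i, w i) + ∑ i, z i * w i * ((∑ s, η s * u i s ^ 2) - 1) := by
    have hexp : ∀ j, η j * ((∑ i, z i * u i j) * (∑ i, w i * u i j))
        = ∑ i, ∑ i', z i * w i' * (η j * u i j * u i' j) := by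
      intro j
      rw [Finset.sum_mul_sum]
      rw [Finset.mul_sum]
      refine Finset.sum_congr rfl fun i _ => ?_
      rw [Finset.mul_sum]
      exact Finset.sum_congr rfl fun i' _ => by ring
    rw [Finset.sum_congr rfl fun j _ => hexp j]
    rw [Finset.sum_comm]
    rw [Finset.sum_congr rfl fun i _ => Finset.sum_comm]
    have hin : ∀ i i' : Fin n, ∑ j, z i * w i' * (η j * u i j * u i' j)
        = z i * w i' + z i * w i' * (if i = i' then ((∑ s, η s * u i s ^ 2) - 1) else 0) := by
      intro i i'
      rw [← Finset.mul_sum, hS i i']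
      ring
    rw [Finset.sum_congr rfl fun i _ => Finset.sum_congr rfl fun i' _ => hin i i']
    rw [Finset.sum_congr rfl fun i (_ : i ∈ univ) => Finset.sum_add_distrib]
    rw [Finset.sum_add_distrib]
    congr 1
    · rw [show (∑ i, z i) * (∑ i, w i) = ∑ i, ∑ i', z i * w i' from by
        rw [Finset.sum_mul_sum]]
    · refine Finset.sum_congr rfl fun i _ => ?_
      rw [Finset.sum_eq_single i]
      · rw [if_pos rfl]
      · intro i' _ hne
        rw [if_neg (fun h => hne h.symm), mul_zero]
      · intro h
        exact absurd (mem_univ i) h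
  have hexpand : ∀ j, η j * ((1 + ∑ i, z i - ∑ i, z i * u i j) * (1 + ∑ i, w i - ∑ i, w i * u i j))
      = η j * ((1 + ∑ i, z i) * (1 + ∑ i, w i))
          - (1 + ∑ i, z i) * (η j * (∑ i, w i * u i j))
          - (1 + ∑ i, w i) * (η j * (∑ i, z i * u i j))
          + η j * ((∑ i, z i * u i j) * (∑ i, w i * u i j)) := by
    intro j
    ring
  rw [Finset.sum_congr rfl fun j _ => hexpand j]
  rw [Finset.sum_add_distrib, Finset.sum_sub_distrib, Finset.sum_sub_distrib,
    ← Finset.sum_mul, ← Finset.mul_sum, ← Finset.mul_sum, hlin z, hlin w, hquad]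
  ring

lemma MM {n : ℕ} (N : ℕ) (u : Fin n → Fin n → ℝ) (η : Fin n → ℝ)
    (h1 : ∀ r, ∑ j, η j * u r j = 1)
    (h2 : ∀ r s, r ≠ s → ∑ j, η j * u r j * u s j = 1)
    (z w : Fin n → ℝ) :
    ∑ x ∈ SM n N, bn N x η
        * ((1 + ∑ i, z i) ^ (N - ∑ j, x j) * ∏ j, (1 + ∑ i, z i - ∑ i, z i * u i j) ^ x j)
        * ((1 + ∑ i, w i) ^ (N - ∑ j, x j) * ∏ j, (1 + ∑ i, w i - ∑ i, w i * u i j) ^ x j)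
      = (1 + ∑ i, z i * w i * ((∑ s, η s * u i s ^ 2) - 1)) ^ N := by
  classical
  rw [← scalar_id u η h1 h2 z w]
  rw [← multi_thm N
    (fun j => η j * ((1 + ∑ i, z i - ∑ i, z i * u i j) * (1 + ∑ i, w i - ∑ i, w i * u i j)))
    ((1 - ∑ j, η j) * ((1 + ∑ i, z i) * (1 + ∑ i, w i)))]
  refine Finset.sum_congr rfl fun x _ => ?_
  simp only [bn, cc, mul_pow, Finset.prod_mul_distrib]
  ring

lemma bilinear {n : ℕ} (N : ℕ) (u : Fin n → Fin n → ℝ) (η : Fin n → ℝ)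
    (h1 : ∀ r, ∑ j, η j * u r j = 1)
    (h2 : ∀ r s, r ≠ s → ∑ j, η j * u r j * u s j = 1)
    (z w : Fin n → ℝ) :
    ∑ m ∈ SM n N, ∑ m' ∈ SM n N,
        (cc N m * ∏ i, z i ^ m i) * (cc N m' * ∏ i, w i ^ m' i)
          * (∑ x ∈ SM n N, bn N x η * P N u m x * P N u m' x)
      = (1 + ∑ i, z i * w i * ((∑ s, η s * u i s ^ 2) - 1)) ^ N := by
  classical
  rw [← MM N u η h1 h2 z w]
  have hx1 : ∀ x ∈ SM n N,
      bn N x η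
        * ((1 + ∑ i, z i) ^ (N - ∑ j, x j) * ∏ j, (1 + ∑ i, z i - ∑ i, z i * u i j) ^ x j)
        * ((1 + ∑ i, w i) ^ (N - ∑ j, x j) * ∏ j, (1 + ∑ i, w i - ∑ i, w i * u i j) ^ x j)
      = ∑ m ∈ SM n N, ∑ m' ∈ SM n N,
          (cc N m * ∏ i, z i ^ m i) * (cc N m' * ∏ i, w i ^ m' i)
            * (bn N x η * P N u m x * P N u m' x) := by
    intro x hx
    rw [← GF N u z x hx, ← GF N u w x hx]
    rw [mul_assoc, Finset.sum_mul_sum, Finset.mul_sum]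
    refine Finset.sum_congr rfl fun m _ => ?_
    rw [Finset.mul_sum]
    refine Finset.sum_congr rfl fun m' _ => ?_
    ring
  have hswap : ∑ x ∈ SM n N, ∑ m ∈ SM n N, ∑ m' ∈ SM n N,
        (cc N m * ∏ i, z i ^ m i) * (cc N m' * ∏ i, w i ^ m' i)
          * (bn N x η * P N u m x * P N u m' x)
      = ∑ m ∈ SM n N, ∑ m' ∈ SM n N, ∑ x ∈ SM n N,
          (cc N m * ∏ i, z i ^ m i) * (cc N m' * ∏ i, w i ^ m' i)
            * (bn N x η * P N u m x * P N u m' x) := by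
    rw [Finset.sum_comm]
    exact Finset.sum_congr rfl fun m _ => Finset.sum_comm
  rw [Finset.sum_congr rfl hx1, hswap]
  refine Finset.sum_congr rfl fun m _ => Finset.sum_congr rfl fun m' _ => ?_
  rw [Finset.mul_sum]

noncomputable def emon {n : ℕ} (a b : Fin n → ℕ) : (Fin n ⊕ Fin n) →₀ ℕ :=
  Finsupp.equivFunOnFinite.symm (Sum.elim a b)

lemma emon_inj {n : ℕ} {a b a' b' : Fin n → ℕ} (h : emon a b = emon a' b') :
    a = a' ∧ b = b' := by
  have h2 : Sum.elim a b = Sum.elim a' b' := Finsupp.equivFunOnFinite.symm.injective h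
  constructor
  · funext i
    exact congrFun h2 (Sum.inl i)
  · funext i
    exact congrFun h2 (Sum.inr i)

lemma eval_emon {n : ℕ} (v : Fin n ⊕ Fin n → ℝ) (a b : Fin n → ℕ) (c : ℝ) :
    MvPolynomial.eval v (MvPolynomial.monomial (emon a b) c)
      = c * (∏ i, v (Sum.inl i) ^ a i) * ∏ i, v (Sum.inr i) ^ b i := by
  rw [MvPolynomial.eval_monomial]
  rw [Finsupp.prod_fintype _ _ (fun i => pow_zero _)]
  simp only [show ∀ s, (emon a b) s = Sum.elim a b s from fun s => rfl]
  rw [Fintype.prod_sum_type]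
  simp only [Sum.elim_inl, Sum.elim_inr]
  ring

lemma coeff_extract {n : ℕ} (N : ℕ) (u : Fin n → Fin n → ℝ) (η : Fin n → ℝ)
    (h1 : ∀ r, ∑ j, η j * u r j = 1)
    (h2 : ∀ r s, r ≠ s → ∑ j, η j * u r j * u s j = 1)
    (m m' : Fin n → ℕ) (hm : m ∈ SM n N) (hm' : m' ∈ SM n N) :
    cc N m * cc N m' * (∑ x ∈ SM n N, bn N x η * P N u m x * P N u m' x)
      = if m = m' then cc N m * ∏ i, ((∑ s, η s * u i s ^ 2) - 1) ^ m i else 0 := by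
  classical
  set Q1 : MvPolynomial (Fin n ⊕ Fin n) ℝ :=
    ∑ a ∈ SM n N, ∑ b ∈ SM n N,
      MvPolynomial.monomial (emon a b)
        (cc N a * cc N b * (∑ x ∈ SM n N, bn N x η * P N u a x * P N u b x)) with hQ1
  set Q2 : MvPolynomial (Fin n ⊕ Fin n) ℝ :=
    ∑ d ∈ SM n N,
      MvPolynomial.monomial (emon d d)
        (cc N d * ∏ i, ((∑ s, η s * u i s ^ 2) - 1) ^ d i) with hQ2
  have heq : Q1 = Q2 := by
    apply MvPolynomial.funext
    intro v
    rw [hQ1, hQ2]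
    rw [map_sum, map_sum]
    rw [Finset.sum_congr rfl fun a _ => map_sum (MvPolynomial.eval v) _ _]
    rw [Finset.sum_congr rfl fun a _ => Finset.sum_congr rfl fun b _ => eval_emon v a b _]
    rw [Finset.sum_congr rfl fun d _ => eval_emon v d d _]
    have hbil := bilinear N u η h1 h2 (fun i => v (Sum.inl i)) (fun i => v (Sum.inr i))
    rw [show ∑ a ∈ SM n N, ∑ b ∈ SM n N,
          (cc N a * cc N b * (∑ x ∈ SM n N, bn N x η * P N u a x * P N u b x))
            * (∏ i, v (Sum.inl i) ^ a i) * ∏ i, v (Sum.inr i) ^ b i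
        = ∑ a ∈ SM n N, ∑ b ∈ SM n N,
            (cc N a * ∏ i, v (Sum.inl i) ^ a i) * (cc N b * ∏ i, v (Sum.inr i) ^ b i)
              * (∑ x ∈ SM n N, bn N x η * P N u a x * P N u b x) from
      Finset.sum_congr rfl fun a _ => Finset.sum_congr rfl fun b _ => by ring]
    rw [hbil]
    rw [show (1 + ∑ i, v (Sum.inl i) * v (Sum.inr i) * ((∑ s, η s * u i s ^ 2) - 1))
        = (∑ i, v (Sum.inl i) * v (Sum.inr i) * ((∑ s, η s * u i s ^ 2) - 1)) + 1 from by ring]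
    rw [← multi_thm N (fun i => v (Sum.inl i) * v (Sum.inr i) * ((∑ s, η s * u i s ^ 2) - 1)) 1]
    refine Finset.sum_congr rfl fun d _ => ?_
    rw [one_pow]
    rw [show ∏ i, (v (Sum.inl i) * v (Sum.inr i) * ((∑ s, η s * u i s ^ 2) - 1)) ^ d i
        = (∏ i, v (Sum.inl i) ^ d i) * (∏ i, v (Sum.inr i) ^ d i)
            * ∏ i, ((∑ s, η s * u i s ^ 2) - 1) ^ d i from by
      simp only [mul_pow, Finset.prod_mul_distrib]]
    ring
  have hc1 : MvPolynomial.coeff (emon m m') Q1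
      = cc N m * cc N m' * (∑ x ∈ SM n N, bn N x η * P N u m x * P N u m' x) := by
    rw [hQ1, MvPolynomial.coeff_sum]
    rw [Finset.sum_congr rfl fun a _ => MvPolynomial.coeff_sum _ _ _]
    rw [Finset.sum_congr rfl fun a _ => Finset.sum_congr rfl fun b _ =>
      MvPolynomial.coeff_monomial _ _ _]
    rw [Finset.sum_eq_single_of_mem m hm]
    · rw [Finset.sum_eq_single_of_mem m' hm']
      · rw [if_pos rfl]
      · intro b _ hb
        rw [if_neg]
        intro hcon
        exact hb (emon_inj hcon).2
    · intro a _ ha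
      apply Finset.sum_eq_zero
      intro b _
      rw [if_neg]
      intro hcon
      exact ha (emon_inj hcon).1
  have hc2 : MvPolynomial.coeff (emon m m') Q2
      = if m = m' then cc N m * ∏ i, ((∑ s, η s * u i s ^ 2) - 1) ^ m i else 0 := by
    rw [hQ2, MvPolynomial.coeff_sum]
    rw [Finset.sum_congr rfl fun d _ => MvPolynomial.coeff_monomial _ _ _]
    by_cases hmm : m = m'
    · subst hmm
      rw [if_pos rfl]
      rw [Finset.sum_eq_single_of_mem m hm]
      · rw [if_pos rfl]
      · intro d _ hd
        rw [if_neg]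
        intro hcon
        exact hd (emon_inj hcon).1
    · rw [if_neg hmm]
      apply Finset.sum_eq_zero
      intro d _
      rw [if_neg]
      intro hcon
      obtain ⟨hd1, hd2⟩ := emon_inj hcon
      exact hmm (hd1.symm.trans hd2)
  rw [← hc1, heq, hc2]

lemma rhs_eval {n : ℕ} (N : ℕ) (u : Fin n → Fin n → ℝ) (η : Fin n → ℝ) (m m' : Fin n → ℕ)
    (hm : ∑ k, m k ≤ N) (hm' : ∑ k, m' k ≤ N) :
    poch ((∑ k, (m' k : ℝ)) - N) (N - ∑ j, m j) *
        (∏ k, poch (-(m' k : ℝ)) (m k)) / poch (-(N : ℝ)) N *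
        ∏ j, ((∑ s, η s * u j s ^ 2) - 1) ^ m j
      = if m = m' then
          ((∏ i, ((m i).factorial : ℝ)) * ((N - ∑ i, m i).factorial : ℝ) / (N.factorial : ℝ))
            * ∏ j, ((∑ s, η s * u j s ^ 2) - 1) ^ m j
        else 0 := by
  have hN : poch (-(N:ℝ)) N = (-1)^N * (N.factorial : ℝ) := by
    rw [poch_neg_nat, Nat.descFactorial_self]
  have hcast : ((∑ k, (m' k : ℝ)) - N) = -(((N - ∑ k, m' k : ℕ) : ℝ)) := by
    rw [Nat.cast_sub hm']
    push_cast
    ring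
  by_cases hmm : m = m'
  · subst hmm
    rw [if_pos rfl]
    rw [hcast, poch_neg_nat, hN]
    rw [show (N - ∑ k, m k).descFactorial (N - ∑ j, m j) = (N - ∑ j, m j).factorial from
      Nat.descFactorial_self _]
    rw [show (∏ k, poch (-(m k : ℝ)) (m k)) = (-1)^(∑ k, m k) * ∏ k, ((m k).factorial : ℝ) by
      rw [Finset.prod_congr rfl fun k _ => by
        rw [poch_neg_nat (m k) (m k), Nat.descFactorial_self]]
      rw [Finset.prod_mul_distrib, Finset.prod_pow_eq_pow_sum]]
    have hsgn : ((-1:ℝ))^(N - ∑ j, m j) * (-1:ℝ)^(∑ k, m k) = (-1:ℝ)^N := by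
      rw [← pow_add]
      congr 1
      omega
    rw [show (-1:ℝ)^(N - ∑ j, m j) * (((N - ∑ j, m j).factorial : ℝ))
          * ((-1:ℝ)^(∑ k, m k) * ∏ k, ((m k).factorial : ℝ))
        = (-1:ℝ)^N * (((N - ∑ j, m j).factorial : ℝ) * ∏ k, ((m k).factorial : ℝ)) from by
      rw [← hsgn]; ring]
    rw [mul_div_mul_left _ _ (by positivity : ((-1:ℝ)^N) ≠ 0)]
    ring
  · rw [if_neg hmm]
    by_cases hdom : ∀ k, m k ≤ m' k
    · have hne : ∃ k, m k < m' k := by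
        by_contra hc
        push_neg at hc
        exact hmm (funext fun k => le_antisymm (hdom k) (hc k))
      have hlt : ∑ k, m k < ∑ k, m' k := by
        obtain ⟨k, hk⟩ := hne
        exact Finset.sum_lt_sum (fun i _ => hdom i) ⟨k, mem_univ k, hk⟩
      rw [hcast, poch_neg_nat]
      rw [show (N - ∑ k, m' k).descFactorial (N - ∑ j, m j) = 0 from
        Nat.descFactorial_eq_zero_iff_lt.mpr (by omega)]
      simp
    · push_neg at hdom
      obtain ⟨k, hk⟩ := hdom
      have h0 : poch (-(m' k : ℝ)) (m k) = 0 := by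
        rw [poch_neg_nat]
        rw [show (m' k).descFactorial (m k) = 0 from Nat.descFactorial_eq_zero_iff_lt.mpr hk]
        simp
      rw [Finset.prod_eq_zero (mem_univ k) h0]
      simp

lemma cc_pos {n : ℕ} (N : ℕ) (y : Fin n → ℕ) : 0 < cc N y := by
  unfold cc
  apply div_pos
  · exact_mod_cast Nat.factorial_pos N
  · apply mul_pos
    · apply Finset.prod_pos
      intro i _
      exact_mod_cast Nat.factorial_pos (y i)
    · exact_mod_cast Nat.factorial_pos _

/-- The evaluation (4.12) of the orthogonality sum `I_m^{m'}` under the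
necessary condition (3.4) and the sufficient condition (4.11). -/
theorem stmt_10 (N n : ℕ) (hN : 1 ≤ N) (hn : 1 ≤ n)
    (u : Fin n → Fin n → ℝ) (η : Fin n → ℝ)
    (hη : ∀ j, 0 ≤ η j) (hηs : ∑ j, η j ≤ 1)
    (h1 : ∀ r, ∑ j, η j * u r j = 1)
    (h2 : ∀ r s, r ≠ s → ∑ j, η j * u r j * u s j = 1) :
    ∀ m m' : Fin n → ℕ, ∑ k, m k ≤ N → ∑ k, m' k ≤ N →
      ∑ x ∈ Finset.filter (fun x => ∑ i, x i ≤ N)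
          (Fintype.piFinset fun _ : Fin n => Finset.range (N + 1)),
        bn N x η * P N u m x * P N u m' x
      = poch ((∑ k, (m' k : ℝ)) - N) (N - ∑ j, m j) *
          (∏ k, poch (-(m' k : ℝ)) (m k)) / poch (-(N : ℝ)) N *
          ∏ j, ((∑ s, η s * u j s ^ 2) - 1) ^ m j := by
  intro m m' hm hm'
  have hmS : m ∈ SM n N := mem_SM_of_sum hm
  have hm'S : m' ∈ SM n N := mem_SM_of_sum hm'
  have hext := coeff_extract N u η h1 h2 m m' hmS hm'S
  have hcm := cc_pos N m
  have hcm' := cc_pos N m'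
  have hI : (∑ x ∈ SM n N, bn N x η * P N u m x * P N u m' x)
      = (if m = m' then cc N m * ∏ i, ((∑ s, η s * u i s ^ 2) - 1) ^ m i else 0)
          / (cc N m * cc N m') := by
    rw [eq_div_iff (by positivity)]
    linear_combination hext
  show (∑ x ∈ SM n N, bn N x η * P N u m x * P N u m' x) = _
  rw [hI, rhs_eval N u η m m' hm hm']
  by_cases hmm : m = m'
  · subst hmm
    rw [if_pos rfl, if_pos rfl]
    rw [show cc N m * cc N m = cc N m * cc N m from rfl]
    have hne : cc N m ≠ 0 := ne_of_gt hcm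
    rw [show (cc N m * ∏ i, ((∑ s, η s * u i s ^ 2) - 1) ^ m i) / (cc N m * cc N m)
        = (∏ i, ((∑ s, η s * u i s ^ 2) - 1) ^ m i) / cc N m from by
      rw [mul_div_mul_left _ _ hne]]
    simp only [cc]
    have hfne : (N.factorial : ℝ) ≠ 0 := Nat.cast_ne_zero.mpr (Nat.factorial_ne_zero _)
    have hpne : (∏ i, ((m i).factorial : ℝ)) ≠ 0 :=
      Finset.prod_ne_zero_iff.mpr fun i _ => Nat.cast_ne_zero.mpr (Nat.factorial_ne_zero _)
    have hqne : ((N - ∑ i, m i).factorial : ℝ) ≠ 0 := Nat.cast_ne_zero.mpr (Nat.factorial_ne_zero _)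
    field_simp
  · rw [if_neg hmm, if_neg hmm]
    simp
end
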